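/- arXiv:1601.02335 — 7 statements merged into one kernel-verified Lean document; each statement's English description precedes it below -/
import Mathlib

section
/- Let n ≥ 1 and let X, A, B be n×n complex Hermitian matrices with X positive semidefinite. Then there exists a vector x ∈ ℂⁿ such that xᴴAx = tr(AX) and xᴴBx = tr(BX). -/
open Matrix ComplexOrder

lemma qcqp_cross {n : ℕ} {A : Matrix (Fin n) (Fin n) ℂ} (hA : A.IsHermitian) (x y : Fin n → ℂ) :
    star (star x ⬝ᵥ A *ᵥ y) = star y ⬝ᵥ A *ᵥ x := by
  have hAe : ∀ j k, (starRingEnd ℂ) (A j k) = A k j := fun j k => by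
    conv_rhs => rw [← hA]
    simp [conjTranspose_apply]
  simp only [dotProduct, mulVec, Pi.star_apply, Complex.star_def, map_sum, _root_.map_mul,
    Finset.mul_sum, Complex.conj_conj]
  rw [Finset.sum_comm]
  refine Finset.sum_congr rfl fun k _ => Finset.sum_congr rfl fun j _ => ?_
  simp [hAe]
  ring

lemma qcqp_quad_real {n : ℕ} {A : Matrix (Fin n) (Fin n) ℂ} (hA : A.IsHermitian) (x : Fin n → ℂ) :
    ((star x ⬝ᵥ A *ᵥ x).re : ℂ) = star x ⬝ᵥ A *ᵥ x :=
  Complex.conj_eq_iff_re.mp (qcqp_cross hA x x)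

lemma qcqp_expand {n : ℕ} (M : Matrix (Fin n) (Fin n) ℂ) (x y : Fin n → ℂ) (a b : ℂ) :
    star (a • x + b • y) ⬝ᵥ M *ᵥ (a • x + b • y) =
      star a * a * (star x ⬝ᵥ M *ᵥ x) + star a * b * (star x ⬝ᵥ M *ᵥ y)
      + star b * a * (star y ⬝ᵥ M *ᵥ x) + star b * b * (star y ⬝ᵥ M *ᵥ y) := by
  simp only [star_add, star_smul, mulVec_add, mulVec_smul, add_dotProduct, dotProduct_add,
    smul_dotProduct, dotProduct_smul, smul_eq_mul]
  ring

lemma qcqp_combine {n : ℕ} {M : Matrix (Fin n) (Fin n) ℂ} (hM : M.IsHermitian) (x y : Fin n → ℂ)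
    (c : ℂ) (hc : star c * c = 1) (u v : ℝ)
    (hquad : 2*u^2*(star x ⬝ᵥ M *ᵥ x).re + 4*(u*v)*(c * (star x ⬝ᵥ M *ᵥ y)).re
      + 2*v^2*(star y ⬝ᵥ M *ᵥ y).re
      = (star x ⬝ᵥ M *ᵥ x).re + (star y ⬝ᵥ M *ᵥ y).re) :
    star ((((Real.sqrt 2 * u : ℝ)):ℂ) • x + ((((Real.sqrt 2 * v : ℝ)):ℂ) * c) • y) ⬝ᵥ M *ᵥ
      ((((Real.sqrt 2 * u : ℝ)):ℂ) • x + ((((Real.sqrt 2 * v : ℝ)):ℂ) * c) • y)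
      = star x ⬝ᵥ M *ᵥ x + star y ⬝ᵥ M *ᵥ y := by
  rw [qcqp_expand, ← qcqp_cross hM x y, ← qcqp_quad_real hM x, ← qcqp_quad_real hM y]
  set α := star x ⬝ᵥ M *ᵥ y with hα
  have e1 : c * α + star c * star α = ((2*(c*α).re : ℝ) : ℂ) := by
    rw [← Complex.add_conj]
    simp [Complex.star_def, _root_.map_mul]
  have e3 : ((Real.sqrt 2 : ℝ):ℂ) * ((Real.sqrt 2:ℝ):ℂ) = 2 := by
    exact_mod_cast congrArg (Complex.ofReal) (Real.mul_self_sqrt (by norm_num : (0:ℝ) ≤ 2))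
  have e6 := congrArg (Complex.ofReal) hquad
  push_cast at e6 ⊢
  simp only [Complex.star_def, _root_.map_mul, Complex.conj_ofReal]
  push_cast at e1 e3
  simp only [Complex.star_def] at e1 hc
  linear_combination ((Real.sqrt 2:ℂ)*(Real.sqrt 2:ℂ)*(u:ℂ)*(v:ℂ)) * e1
    + ((Real.sqrt 2:ℂ)*(Real.sqrt 2:ℂ)*(v:ℂ)^2*((star y ⬝ᵥ M *ᵥ y).re:ℂ)) * hc
    + ((u:ℂ)^2*((star x ⬝ᵥ M *ᵥ x).re:ℂ) + 2*(u:ℂ)*(v:ℂ)*((c*α).re:ℂ)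
        + (v:ℂ)^2*((star y ⬝ᵥ M *ᵥ y).re:ℂ)) * e3
    + e6

lemma qcqp_unit_phase (γ : ℂ) : ∃ c : ℂ, star c * c = 1 ∧ (c * γ).re = 0 := by
  by_cases hγ : γ = 0
  · exact ⟨1, by simp, by simp [hγ]⟩
  · set r := Real.sqrt (γ.re^2 + γ.im^2) with hr
    have hpos : 0 < γ.re^2 + γ.im^2 := by
      have hor : γ.re ≠ 0 ∨ γ.im ≠ 0 := by
        by_contra hcon
        push_neg at hcon
        exact hγ (Complex.ext hcon.1 hcon.2)
      rcases hor with h | h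
      · nlinarith [mul_self_pos.mpr h, sq_nonneg γ.im]
      · nlinarith [mul_self_pos.mpr h, sq_nonneg γ.re]
    have hrr : r^2 = γ.re^2 + γ.im^2 := Real.sq_sqrt (le_of_lt hpos)
    have hr0 : 0 < r := Real.sqrt_pos.mpr hpos
    refine ⟨(↑(γ.im/r) + ↑(γ.re/r)*Complex.I), ?_, ?_⟩
    · have h1 : star ((↑(γ.im/r) + ↑(γ.re/r)*Complex.I) : ℂ) * (↑(γ.im/r) + ↑(γ.re/r)*Complex.I)
          = ((Complex.normSq (↑(γ.im/r) + ↑(γ.re/r)*Complex.I) : ℝ) : ℂ) := by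
        rw [mul_comm, Complex.star_def, Complex.mul_conj]
      rw [h1, Complex.normSq_add_mul_I]
      have : (γ.im/r)^2 + (γ.re/r)^2 = 1 := by
        field_simp
        linarith [hrr]
      rw [this, Complex.ofReal_one]
    · simp only [Complex.mul_re, Complex.add_re, Complex.add_im, Complex.ofReal_re,
        Complex.ofReal_im, Complex.mul_im, Complex.I_re, Complex.I_im]
      field_simp
      ring

lemma qcqp_uv (m : ℝ) :
    ∃ u v s : ℝ, u^2 = (1 - m*s)/2 ∧ v^2 = (1 + m*s)/2 ∧ u*v = s/2 := by
  set s := (Real.sqrt (1 + m^2))⁻¹ with hs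
  have hspos : 0 < s := by
    rw [hs]
    exact inv_pos.mpr (Real.sqrt_pos.mpr (by positivity))
  have hs2 : s^2 * (1 + m^2) = 1 := by
    rw [hs, inv_pow, Real.sq_sqrt (by positivity : (0:ℝ) ≤ 1 + m^2)]
    field_simp
  have hms1 : 1 - m*s ≥ 0 := by nlinarith [sq_nonneg (m*s), sq_nonneg s, sq_nonneg m]
  have hms2 : 1 + m*s ≥ 0 := by nlinarith [sq_nonneg (m*s), sq_nonneg s, sq_nonneg m]
  refine ⟨Real.sqrt ((1 - m*s)/2), Real.sqrt ((1 + m*s)/2), s,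
    Real.sq_sqrt (by linarith), Real.sq_sqrt (by linarith), ?_⟩
  rw [← Real.sqrt_mul (by linarith)]
  have h4 : (1 - m*s)/2 * ((1 + m*s)/2) = (s/2)^2 := by nlinarith [hs2]
  rw [h4, Real.sqrt_sq (by positivity)]

lemma qcqp_pair {n : ℕ} {A B : Matrix (Fin n) (Fin n) ℂ} (hA : A.IsHermitian)
    (hB : B.IsHermitian) (x y : Fin n → ℂ) :
    ∃ z : Fin n → ℂ,
      star z ⬝ᵥ A *ᵥ z = star x ⬝ᵥ A *ᵥ x + star y ⬝ᵥ A *ᵥ y ∧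
      star z ⬝ᵥ B *ᵥ z = star x ⬝ᵥ B *ᵥ x + star y ⬝ᵥ B *ᵥ y := by
  set pA := (star x ⬝ᵥ A *ᵥ x).re with hpA
  set qA := (star y ⬝ᵥ A *ᵥ y).re with hqA
  set pB := (star x ⬝ᵥ B *ᵥ x).re with hpB
  set qB := (star y ⬝ᵥ B *ᵥ y).re with hqB
  set α := star x ⬝ᵥ A *ᵥ y with hαd
  set β := star x ⬝ᵥ B *ᵥ y with hβd
  by_cases hdeg : pA = qA ∧ pB = qB
  · refine ⟨(((Real.sqrt 2 * 1 : ℝ)):ℂ) • x + ((((Real.sqrt 2 * 0 : ℝ)):ℂ) * 1) • y,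
      qcqp_combine hA x y 1 (by simp) 1 0 ?_, qcqp_combine hB x y 1 (by simp) 1 0 ?_⟩
    · rw [← hpA, ← hqA, hdeg.1]; ring
    · rw [← hpB, ← hqB, hdeg.2]; ring
  · set d1 := pA - qA with hd1
    set d2 := pB - qB with hd2
    have hdd : 0 < d1^2 + d2^2 := by
      rcases not_and_or.mp hdeg with h | h
      · have h1 : d1 ≠ 0 := sub_ne_zero.mpr h
        have := mul_self_pos.mpr h1
        nlinarith [sq_nonneg d2]
      · have h1 : d2 ≠ 0 := sub_ne_zero.mpr h
        have := mul_self_pos.mpr h1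
        nlinarith [sq_nonneg d1]
    obtain ⟨c, hc1, hc2⟩ := qcqp_unit_phase ((d1:ℂ)*β - (d2:ℂ)*α)
    set w1 := (c * α).re with hw1
    set w2 := (c * β).re with hw2
    have hw : d1 * w2 - d2 * w1 = 0 := by
      have hexp : c * ((d1:ℂ)*β - (d2:ℂ)*α) = (d1:ℂ)*(c*β) - (d2:ℂ)*(c*α) := by ring
      have h := congrArg Complex.re hexp
      rw [hc2] at h
      simp only [Complex.sub_re, Complex.mul_re, Complex.ofReal_re, Complex.ofReal_im,
        zero_mul, sub_zero] at h
      have hq1 : w1 = c.re * α.re - c.im * α.im := by rw [hw1, Complex.mul_re]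
      have hq2 : w2 = c.re * β.re - c.im * β.im := by rw [hw2, Complex.mul_re]
      rw [hq1, hq2]
      linarith
    set lam := (w1*d1 + w2*d2)/(d1^2+d2^2) with hlam
    have hl1 : w1 = lam * d1 := by
      rw [hlam]
      field_simp
      linear_combination (-d2) * hw
    have hl2 : w2 = lam * d2 := by
      rw [hlam]
      field_simp
      linear_combination d1 * hw
    obtain ⟨u, v, s, hu2, hv2, huv⟩ := qcqp_uv (2 * lam)
    refine ⟨_, qcqp_combine hA x y c hc1 u v ?_, qcqp_combine hB x y c hc1 u v ?_⟩
    · rw [← hpA, ← hqA, ← hw1]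
      linear_combination (2*pA)*hu2 + (2*qA)*hv2 + (4*w1)*huv + (2*s)*hl1
    · rw [← hpB, ← hqB, ← hw2]
      linear_combination (2*pB)*hu2 + (2*qB)*hv2 + (4*w2)*huv + (2*s)*hl2

lemma qcqp_sum_rep {n : ℕ} {A B : Matrix (Fin n) (Fin n) ℂ} (hA : A.IsHermitian)
    (hB : B.IsHermitian) :
    ∀ (m : ℕ) (g : Fin m → Fin n → ℂ),
      ∃ z : Fin n → ℂ,
        star z ⬝ᵥ A *ᵥ z = ∑ i, star (g i) ⬝ᵥ A *ᵥ (g i) ∧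
        star z ⬝ᵥ B *ᵥ z = ∑ i, star (g i) ⬝ᵥ B *ᵥ (g i) := by
  intro m
  induction m with
  | zero => exact fun g => ⟨0, by simp, by simp⟩
  | succ m ih =>
    intro g
    obtain ⟨z0, h1, h2⟩ := ih (fun i => g i.succ)
    obtain ⟨z, hz1, hz2⟩ := qcqp_pair hA hB z0 (g 0)
    refine ⟨z, ?_, ?_⟩
    · rw [hz1, h1, Fin.sum_univ_succ]
      try ring
    · rw [hz2, h2, Fin.sum_univ_succ]
      try ring

lemma qcqp_trace_decomp {n : ℕ} (A C : Matrix (Fin n) (Fin n) ℂ) :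
    (A * (Cᴴ * C)).trace
      = ∑ i, star (fun j => star (C i j)) ⬝ᵥ A *ᵥ (fun j => star (C i j)) := by
  rw [← Matrix.mul_assoc, Matrix.trace_mul_comm, Matrix.trace]
  refine Finset.sum_congr rfl fun i _ => ?_
  simp only [diag_apply, Matrix.mul_apply, conjTranspose_apply, dotProduct, mulVec,
    Pi.star_apply, star_star, Finset.mul_sum]

/-- Lemma 1: For Hermitian `A`, `B` and PSD `X`, there is a vector `x` whose quadratic
forms match the traces `tr(AX)` and `tr(BX)`. -/
theorem stmt_0 (n : ℕ) (hn : 1 ≤ n) (X A B : Matrix (Fin n) (Fin n) ℂ)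
    (hX : X.PosSemidef) (hA : A.IsHermitian) (hB : B.IsHermitian) :
    ∃ x : Fin n → ℂ,
      star x ⬝ᵥ A *ᵥ x = (A * X).trace ∧
      star x ⬝ᵥ B *ᵥ x = (B * X).trace := by
  obtain ⟨C, rfl⟩ : ∃ C : Matrix (Fin n) (Fin n) ℂ, X = Cᴴ * C := by
    open scoped MatrixOrder in
    obtain ⟨Y, hY, -, hYY⟩ := CFC.exists_sqrt_of_isSelfAdjoint_of_quasispectrumRestricts
      hX.isHermitian (QuasispectrumRestricts.nnreal_of_nonneg hX.nonneg)
    exact ⟨Y, by rw [← hYY]; congr 1; exact hY.star_eq.symm⟩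
  obtain ⟨z, hz1, hz2⟩ := qcqp_sum_rep hA hB n (fun i => (fun j => star (C i j)))
  exact ⟨z, by rw [hz1, qcqp_trace_decomp], by rw [hz2, qcqp_trace_decomp]⟩
end

section
/- Let n, m ≥ 1, ρ > 0, let A₀, A₁, …, A_m be n×n complex Hermitian matrices, b₀, b₁, …, b_m ∈ ℂⁿ, and c₁, …, c_m ∈ ℝ. Suppose sequences x^t ∈ ℂⁿ, z_i^t ∈ ℂⁿ, u_i^t ∈ ℂⁿ, μ_i^t ∈ ℝ (for i = 1, …, m and t ∈ ℕ) satisfy, for every t ≥ 0 and every i: (a) (A₀ + mρI)x^{t+1} = b₀ + ρ·Σ_{i=1}^m (z_i^t + u_i^t); (b) u_i^{t+1} = u_i^t + z_i^{t+1} − x^{t+1}; (c) (z_i^{t+1})ᴴA_i z_i^{t+1} − 2Re(b_iᴴ z_i^{t+1}) ≤ c_i; (d) μ_i^{t+1} ≥ 0 and u_i^{t+1} + μ_i^{t+1}(A_i z_i^{t+1} − b_i) = 0; (e) μ_i^{t+1}·((z_i^{t+1})ᴴA_i z_i^{t+1} − 2Re(b_iᴴ z_i^{t+1}) − c_i) =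 0. Assume further that z_i^t − x^t → 0 for every i and x^{t+1} − x^t → 0 as t → ∞. Then for any strictly increasing sequence of indices t_k along which x^{t_k} → x⋆ and μ_i^{t_k} → μ_i⋆ for every i, the point x⋆ with multipliers ρμ⋆ is a KKT point of the QCQP: A₀x⋆ − b₀ + Σ_{i=1}^m ρμ_i⋆ (A_i x⋆ − b_i) = 0; ρμ_i⋆ ≥ 0; x⋆ᴴA_i x⋆ − 2Re(b_iᴴx⋆) ≤ c_i; and ρμ_i⋆·(x⋆ᴴA_i x⋆ − 2Re(b_iᴴx⋆) − c_i) = 0 for every i. -/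
open Matrix Filter Topology

/-- Theorem 1 of the paper: if the consensus-ADMM iterates for the QCQP satisfy the
update equations, the `z`-subproblem KKT conditions, and the residuals
`z_i^t − x^t → 0`, `x^{t+1} − x^t → 0`, then any limit point of `x^t` (along a
subsequence where the multipliers also converge) is a KKT point of the QCQP. -/
theorem stmt_1 (n m : ℕ) (hn : 1 ≤ n) (hm : 1 ≤ m) (ρ : ℝ) (hρ : 0 < ρ)
    (A0 : Matrix (Fin n) (Fin n) ℂ) (A : Fin m → Matrix (Fin n) (Fin n) ℂ)
    (b0 : Fin n → ℂ) (b : Fin m → Fin n → ℂ) (c : Fin m → ℝ)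
    (hA0 : A0.IsHermitian) (hA : ∀ i, (A i).IsHermitian)
    (x : ℕ → Fin n → ℂ) (z u : Fin m → ℕ → Fin n → ℂ) (μ : Fin m → ℕ → ℝ)
    -- (a) x-update
    (ha : ∀ t : ℕ, (A0 + ((m : ℂ) * (ρ : ℂ)) • (1 : Matrix (Fin n) (Fin n) ℂ)) *ᵥ x (t + 1)
        = b0 + (ρ : ℂ) • ∑ i, (z i t + u i t))
    -- (b) dual update
    (hb : ∀ t : ℕ, ∀ i, u i (t + 1) = u i t + z i (t + 1) - x (t + 1))
    -- (c) primal feasibility of z_i^{t+1}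
    (hc : ∀ t : ℕ, ∀ i,
        (star (z i (t + 1)) ⬝ᵥ (A i) *ᵥ z i (t + 1)).re
          - 2 * (star (b i) ⬝ᵥ z i (t + 1)).re ≤ c i)
    -- (d) dual feasibility and stationarity of the z-subproblem
    (hd : ∀ t : ℕ, ∀ i, 0 ≤ μ i (t + 1) ∧
        u i (t + 1) + ((μ i (t + 1) : ℝ) : ℂ) • ((A i) *ᵥ z i (t + 1) - b i) = 0)
    -- (e) complementary slackness of the z-subproblem
    (he : ∀ t : ℕ, ∀ i, μ i (t + 1) *
        ((star (z i (t + 1)) ⬝ᵥ (A i) *ᵥ z i (t + 1)).re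
          - 2 * (star (b i) ⬝ᵥ z i (t + 1)).re - c i) = 0)
    -- residual convergence assumptions
    (hzx : ∀ i, Tendsto (fun t => z i t - x t) atTop (nhds 0))
    (hxx : Tendsto (fun t => x (t + 1) - x t) atTop (nhds 0))
    -- a convergent subsequence
    (φ : ℕ → ℕ) (hφ : StrictMono φ) (xs : Fin n → ℂ) (μs : Fin m → ℝ)
    (hxs : Tendsto (fun k => x (φ k)) atTop (nhds xs))
    (hμs : ∀ i, Tendsto (fun k => μ i (φ k)) atTop (nhds (μs i))) :
    -- KKT conditions at (xs, ρ • μs)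
    A0 *ᵥ xs - b0 + ∑ i, ((ρ * μs i : ℝ) : ℂ) • ((A i) *ᵥ xs - b i) = 0 ∧
    ∀ i, 0 ≤ ρ * μs i ∧
      (star xs ⬝ᵥ (A i) *ᵥ xs).re - 2 * (star (b i) ⬝ᵥ xs).re ≤ c i ∧
      ρ * μs i * ((star xs ⬝ᵥ (A i) *ᵥ xs).re - 2 * (star (b i) ⬝ᵥ xs).re - c i) = 0 := by
  have hφtop : Tendsto φ atTop atTop := hφ.tendsto_atTop
  -- eventually φ k ≥ 1
  have hev : ∀ᶠ k in atTop, 0 < φ k :=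
    eventually_atTop.2 ⟨1, fun k hk => lt_of_lt_of_le hk hφ.le_apply⟩
  -- z converges along the subsequence
  have hz : ∀ i, Tendsto (fun k => z i (φ k)) atTop (nhds xs) := by
    intro i
    have h := ((hzx i).comp hφtop).add hxs
    simp only [Function.comp_def, zero_add] at h
    exact h.congr fun k => by abel
  -- quadratic constraint value converges
  have hq : ∀ i, Tendsto (fun k => (star (z i (φ k)) ⬝ᵥ (A i) *ᵥ z i (φ k)).re
      - 2 * (star (b i) ⬝ᵥ z i (φ k)).re) atTop
      (nhds ((star xs ⬝ᵥ (A i) *ᵥ xs).re - 2 * (star (b i) ⬝ᵥ xs).re)) := by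
    intro i
    have hcont : Continuous (fun v : Fin n → ℂ =>
        (star v ⬝ᵥ (A i) *ᵥ v).re - 2 * (star (b i) ⬝ᵥ v).re) := by
      apply Continuous.sub
      · exact Complex.continuous_re.comp ((continuous_id.star).dotProduct
          (continuous_const.matrix_mulVec continuous_id))
      · exact continuous_const.mul (Complex.continuous_re.comp
          (continuous_const.dotProduct continuous_id))
    exact (hcont.tendsto xs).comp (hz i)
  -- feasibility of the limit
  have hfeas : ∀ i, (star xs ⬝ᵥ (A i) *ᵥ xs).re - 2 * (star (b i) ⬝ᵥ xs).re ≤ c i := by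
    intro i
    refine le_of_tendsto (hq i) ?_
    filter_upwards [hev] with k hk
    rw [← Nat.succ_pred_eq_of_pos hk]
    exact hc (φ k - 1) i
  -- nonnegativity of the limiting multipliers
  have hnn : ∀ i, 0 ≤ μs i := by
    intro i
    refine ge_of_tendsto (hμs i) ?_
    filter_upwards [hev] with k hk
    rw [← Nat.succ_pred_eq_of_pos hk]
    exact (hd (φ k - 1) i).1
  -- complementary slackness in the limit
  have hcs : ∀ i, μs i * ((star xs ⬝ᵥ (A i) *ᵥ xs).re
      - 2 * (star (b i) ⬝ᵥ xs).re - c i) = 0 := by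
    intro i
    have h1 : Tendsto (fun k => μ i (φ k) *
        ((star (z i (φ k)) ⬝ᵥ (A i) *ᵥ z i (φ k)).re
          - 2 * (star (b i) ⬝ᵥ z i (φ k)).re - c i)) atTop
        (nhds (μs i * ((star xs ⬝ᵥ (A i) *ᵥ xs).re
          - 2 * (star (b i) ⬝ᵥ xs).re - c i))) :=
      (hμs i).mul ((hq i).sub tendsto_const_nhds)
    have h2 : (fun k => μ i (φ k) *
        ((star (z i (φ k)) ⬝ᵥ (A i) *ᵥ z i (φ k)).re
          - 2 * (star (b i) ⬝ᵥ z i (φ k)).re - c i)) =ᶠ[atTop] fun _ => (0 : ℝ) := by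
      filter_upwards [hev] with k hk
      rw [← Nat.succ_pred_eq_of_pos hk]
      exact he (φ k - 1) i
    exact tendsto_nhds_unique (h1.congr' h2) tendsto_const_nhds
  -- the key algebraic identity from (a), (b), (d)
  have key : ∀ t : ℕ, A0 *ᵥ x (t + 1) - b0
      + ∑ i, ((ρ * μ i (t + 1) : ℝ) : ℂ) • ((A i) *ᵥ z i (t + 1) - b i)
      = (ρ : ℂ) • ∑ i, (z i t - z i (t + 1)) := by
    intro t
    have h1 := ha t
    rw [Matrix.add_mulVec, Matrix.smul_mulVec, Matrix.one_mulVec] at h1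
    have hu : ∀ i, u i t = x (t + 1) - z i (t + 1)
        - ((μ i (t + 1) : ℝ) : ℂ) • ((A i) *ᵥ z i (t + 1) - b i) := by
      intro i
      have h2 := hb t i
      have h4 : u i (t + 1) = -(((μ i (t + 1) : ℝ) : ℂ) • ((A i) *ᵥ z i (t + 1) - b i)) :=
        eq_neg_of_add_eq_zero_left (hd t i).2
      rw [h4] at h2
      linear_combination (norm := module) -h2
    have hsum : ∑ i, (z i t + u i t)
        = ∑ i, (z i t - z i (t + 1)) + (m : ℂ) • x (t + 1)
          - ∑ i, ((μ i (t + 1) : ℝ) : ℂ) • ((A i) *ᵥ z i (t + 1) - b i) := by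
      rw [show (m : ℂ) • x (t + 1) = ∑ _i : Fin m, x (t + 1) by
        simp [Finset.sum_const, Nat.cast_smul_eq_nsmul ℂ]]
      rw [← Finset.sum_add_distrib, ← Finset.sum_sub_distrib]
      apply Finset.sum_congr rfl
      intro i _
      rw [hu i]
      module
    have h3 : ∑ i, ((ρ * μ i (t + 1) : ℝ) : ℂ) • ((A i) *ᵥ z i (t + 1) - b i)
        = (ρ : ℂ) • ∑ i, ((μ i (t + 1) : ℝ) : ℂ) • ((A i) *ᵥ z i (t + 1) - b i) := by
      rw [Finset.smul_sum]
      apply Finset.sum_congr rfl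
      intro i _
      rw [smul_smul]
      push_cast
      ring_nf
    rw [h3]
    rw [hsum] at h1
    linear_combination (norm := module) h1
  -- the right-hand side of the key identity tends to 0
  have hD : Tendsto (fun t => (ρ : ℂ) • ∑ i, (z i t - z i (t + 1))) atTop
      (nhds 0) := by
    have hS : Tendsto (fun t => ∑ i : Fin m, (z i t - z i (t + 1))) atTop
        (nhds 0) := by
      have h0 : (0 : Fin n → ℂ) = ∑ _i : Fin m, (0 : Fin n → ℂ) := by simp
      rw [h0]
      apply tendsto_finset_sum
      intro i _
      have e2 : Tendsto (fun t => z i (t + 1) - x (t + 1)) atTop (nhds 0) := by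
        have := (hzx i).comp (tendsto_add_atTop_nat 1)
        simpa [Function.comp_def] using this
      have h := ((hzx i).sub hxx).sub e2
      simp only [sub_zero] at h
      exact h.congr fun t => by abel
    have := hS.const_smul ((ρ : ℂ))
    simpa using this
  -- the left-hand side along the subsequence
  have hF : Tendsto (fun t => A0 *ᵥ x (t + 1) - b0
      + ∑ i, ((ρ * μ i (t + 1) : ℝ) : ℂ) • ((A i) *ᵥ z i (t + 1) - b i)) atTop
      (nhds 0) := hD.congr fun t => (key t).symm
  have hφ1 : Tendsto (fun k => φ k - 1) atTop atTop :=
    (tendsto_sub_atTop_nat 1).comp hφtop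
  have hG0 : Tendsto (fun k => A0 *ᵥ x (φ k) - b0
      + ∑ i, ((ρ * μ i (φ k) : ℝ) : ℂ) • ((A i) *ᵥ z i (φ k) - b i)) atTop
      (nhds 0) := by
    refine (hF.comp hφ1).congr' ?_
    filter_upwards [hev] with k hk
    have hkk : φ k - 1 + 1 = φ k := Nat.succ_pred_eq_of_pos hk
    simp only [Function.comp_def, hkk]
  have hGlim : Tendsto (fun k => A0 *ᵥ x (φ k) - b0
      + ∑ i, ((ρ * μ i (φ k) : ℝ) : ℂ) • ((A i) *ᵥ z i (φ k) - b i)) atTop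
      (nhds (A0 *ᵥ xs - b0 + ∑ i, ((ρ * μs i : ℝ) : ℂ) • ((A i) *ᵥ xs - b i))) := by
    have hA0c : Tendsto (fun k => A0 *ᵥ x (φ k)) atTop (nhds (A0 *ᵥ xs)) :=
      (((continuous_const.matrix_mulVec continuous_id).tendsto xs)).comp hxs
    refine (hA0c.sub tendsto_const_nhds).add (tendsto_finset_sum _ fun i _ => ?_)
    have hsc : Tendsto (fun k => ((ρ * μ i (φ k) : ℝ) : ℂ)) atTop
        (nhds ((ρ * μs i : ℝ) : ℂ)) :=
      (Complex.continuous_ofReal.tendsto _).comp (tendsto_const_nhds.mul (hμs i))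
    have hvec : Tendsto (fun k => (A i) *ᵥ z i (φ k) - b i) atTop
        (nhds ((A i) *ᵥ xs - b i)) :=
      ((((continuous_const.matrix_mulVec continuous_id).tendsto xs)).comp (hz i)).sub
        tendsto_const_nhds
    exact hsc.smul hvec
  refine ⟨tendsto_nhds_unique hGlim hG0, fun i => ⟨mul_nonneg hρ.le (hnn i), hfeas i, ?_⟩⟩
  rw [mul_assoc, hcs i, mul_zero]
end

section
/- Let n ≥ 1, a ∈ ℂⁿ with a ≠ 0, ζ ∈ ℂⁿ with aᴴζ ≠ 0, and c ≥ 0. Define z⋆ = ζ + ((√c − |aᴴζ|)/(‖a‖²·|aᴴζ|))·(aᴴζ)·a. Then |aᴴz⋆|² = c, and for every z ∈ ℂⁿ with |aᴴz|² = c one has ‖z⋆ − ζ‖ ≤ ‖z − ζ‖; that is, z⋆ is a global minimizer of ‖z − ζ‖² over the non-convex set {z ∈ ℂⁿ : |aᴴz|² = c}. -/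
open Matrix

/-- Closed-form solution (eq. (9)) of the rank-one homogeneous QCQP-1:
`z⋆ = ζ + ((√c − |aᴴζ|)/(‖a‖²|aᴴζ|))·(aᴴζ)·a` satisfies `|aᴴz⋆|² = c` and is a global
minimizer of `‖z − ζ‖²` over `{z : |aᴴz|² = c}`. -/
theorem stmt_2 (n : ℕ) (hn : 1 ≤ n) (a ζ : Fin n → ℂ) (ha : a ≠ 0)
    (haζ : star a ⬝ᵥ ζ ≠ 0) (c : ℝ) (hc : 0 ≤ c)
    (zstar : Fin n → ℂ)
    (hzstar : zstar = ζ +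
      ((((Real.sqrt c - ‖star a ⬝ᵥ ζ‖) /
          ((∑ k, ‖a k‖ ^ 2) * ‖star a ⬝ᵥ ζ‖) : ℝ) : ℂ)
        * (star a ⬝ᵥ ζ)) • a) :
    ‖star a ⬝ᵥ zstar‖ ^ 2 = c ∧
    ∀ z : Fin n → ℂ, ‖star a ⬝ᵥ z‖ ^ 2 = c →
      ∑ k, ‖zstar k - ζ k‖ ^ 2 ≤ ∑ k, ‖z k - ζ k‖ ^ 2 := by
  set s : ℂ := star a ⬝ᵥ ζ with hs
  set r : ℝ := ‖s‖ with hr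
  set A : ℝ := ∑ k, ‖a k‖ ^ 2 with hA
  have hr0 : 0 < r := by
    simpa [hr] using (norm_pos_iff.mpr haζ)
  have hA0 : 0 < A := by
    obtain ⟨k, hk⟩ : ∃ k, a k ≠ 0 := by
      by_contra h
      push_neg at h
      exact ha (funext h)
    refine Finset.sum_pos' (fun i _ => by positivity) ⟨k, Finset.mem_univ k, ?_⟩
    have := norm_pos_iff.mpr hk
    positivity
  set t : ℝ := (Real.sqrt c - r) / (A * r) with ht
  -- dot product of star a with a
  have haa : star a ⬝ᵥ a = (A : ℂ) := by
    simp only [dotProduct, hA, Pi.star_apply]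
    push_cast
    refine Finset.sum_congr rfl fun k _ => ?_
    rw [Complex.star_def, ← Complex.normSq_eq_conj_mul_self, Complex.normSq_eq_norm_sq]
    push_cast
    ring
  have hdot : star a ⬝ᵥ zstar = s * ((Real.sqrt c / r : ℝ) : ℂ) := by
    rw [hzstar, dotProduct_add, dotProduct_smul, haa, ← hs]
    have h1R : 1 + t * A = Real.sqrt c / r := by
      rw [ht]; field_simp; ring
    have h1 : (1 : ℂ) + (t : ℂ) * A = ((Real.sqrt c / r : ℝ) : ℂ) := by
      have := congrArg (Complex.ofReal) h1R
      push_cast at this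
      exact_mod_cast this
    have : s + ((t : ℂ) * s) * A = s * ((1 : ℂ) + (t : ℂ) * A) := by ring
    rw [smul_eq_mul, this, h1]
  have habs : ‖star a ⬝ᵥ zstar‖ = Real.sqrt c := by
    rw [hdot, norm_mul, ← hr, Complex.norm_real, Real.norm_eq_abs, abs_div,
      abs_of_nonneg (Real.sqrt_nonneg c), abs_of_pos hr0]
    field_simp
  constructor
  · rw [habs, Real.sq_sqrt hc]
  · intro z hz
    -- value of the objective at zstar
    have hobj : ∑ k, ‖zstar k - ζ k‖ ^ 2 = (Real.sqrt c - r) ^ 2 / A := by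
      have hdiff : ∀ k, zstar k - ζ k = ((t : ℂ) * s) * a k := by
        intro k; rw [hzstar]; simp [smul_eq_mul]
      calc ∑ k, ‖zstar k - ζ k‖ ^ 2
          = ∑ k, (‖(t : ℂ) * s‖) ^ 2 * ‖a k‖ ^ 2 := by
            refine Finset.sum_congr rfl fun k _ => ?_
            simp only [hdiff k, norm_mul, mul_pow]
        _ = (‖(t : ℂ) * s‖) ^ 2 * A := by rw [← Finset.mul_sum, hA]
        _ = (t * r) ^ 2 * A := by
            rw [norm_mul, Complex.norm_real, Real.norm_eq_abs, ← hr, mul_pow, mul_pow, sq_abs]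
        _ = (Real.sqrt c - r) ^ 2 / A := by
            rw [ht]; field_simp
    rw [hobj]
    rw [div_le_iff₀ hA0]
    -- lower bound for any feasible z
    have hzabs : ‖star a ⬝ᵥ z‖ = Real.sqrt c := by
      rw [← hz, Real.sqrt_sq (norm_nonneg _)]
    have hdz : star a ⬝ᵥ z - s = star a ⬝ᵥ (z - ζ) := by
      simp [hs, dotProduct_sub]
    have hlow : |Real.sqrt c - r| ≤ ‖star a ⬝ᵥ (z - ζ)‖ := by
      rw [← hdz]
      calc |Real.sqrt c - r| = |‖star a ⬝ᵥ z‖ - ‖s‖| := by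
            rw [hzabs, hr]
        _ ≤ ‖star a ⬝ᵥ z - s‖ := abs_norm_sub_norm_le _ _
    -- Cauchy-Schwarz
    have hCS : ‖star a ⬝ᵥ (z - ζ)‖ ^ 2 ≤
        A * ∑ k, ‖z k - ζ k‖ ^ 2 := by
      have h1 : ‖star a ⬝ᵥ (z - ζ)‖ ≤
          ∑ k, ‖a k‖ * ‖z k - ζ k‖ := by
        refine (norm_sum_le _ _).trans_eq ?_
        refine Finset.sum_congr rfl fun k _ => ?_
        simp [Pi.star_apply, norm_mul]
      have h2 := Finset.sum_mul_sq_le_sq_mul_sq Finset.univ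
        (fun k => ‖a k‖) (fun k => ‖z k - ζ k‖)
      calc ‖star a ⬝ᵥ (z - ζ)‖ ^ 2
          ≤ (∑ k, ‖a k‖ * ‖z k - ζ k‖) ^ 2 := by
            refine pow_le_pow_left₀ (norm_nonneg _) h1 2
        _ ≤ A * ∑ k, ‖z k - ζ k‖ ^ 2 := h2
    calc (Real.sqrt c - r) ^ 2 = |Real.sqrt c - r| ^ 2 := (sq_abs _).symm
      _ ≤ ‖star a ⬝ᵥ (z - ζ)‖ ^ 2 :=
          pow_le_pow_left₀ (abs_nonneg _) hlow 2
      _ ≤ A * ∑ k, ‖z k - ζ k‖ ^ 2 := hCS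
      _ = (∑ k, ‖z k - ζ k‖ ^ 2) * A := mul_comm _ _
end

section
/- Let n ≥ 1, λ ∈ ℝⁿ, ζ ∈ ℂⁿ, c ∈ ℝ, and define φ(μ) = Σ_{k=1}^n λ_k|ζ_k|²/(1+μλ_k)² − c. Let λ_min = min_k λ_k and λ_max = max_k λ_k, and suppose λ_min < 0 < λ_max, and ζ_j ≠ 0 for some index j with λ_j = λ_min and ζ_l ≠ 0 for some index l with λ_l = λ_max. Then there exists a unique μ in the open interval (−1/λ_max, −1/λ_min) such that φ(μ) = 0. -/
section aux
variable {n : ℕ} (lam : Fin n → ℝ)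

/-- All denominators are positive on the interval. -/
lemma aux_pos (j l : Fin n) (hj : ∀ k, lam j ≤ lam k) (hl : ∀ k, lam k ≤ lam l)
    (hjneg : lam j < 0) (hlpos : 0 < lam l)
    {μ : ℝ} (h1 : -1 / lam l < μ) (h2 : μ < -1 / lam j) (k : Fin n) :
    0 < 1 + μ * lam k := by
  rcases lt_trichotomy (lam k) 0 with hk | hk | hk
  · have e : -1 / lam j * lam j = -1 := div_mul_cancel₀ (-1) hjneg.ne
    have h3 : μ * lam k > (-1 / lam j) * lam k :=
      (mul_lt_mul_right_of_neg hk).mpr h2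
    have h4 : (-1 / lam j) * lam j ≤ (-1 / lam j) * lam k :=
      mul_le_mul_of_nonneg_left (hj k)
        (le_of_lt (div_pos_of_neg_of_neg (by norm_num) hjneg))
    linarith
  · simp [hk]
  · have e : -1 / lam l * lam l = -1 := div_mul_cancel₀ (-1) hlpos.ne'
    have h3 : (-1 / lam l) * lam k < μ * lam k :=
      (mul_lt_mul_iff_of_pos_right hk).mpr h1
    have h4 : (-1 / lam l) * lam l ≤ (-1 / lam l) * lam k := by
      apply mul_le_mul_of_nonpos_left (hl k)
      have : (0:ℝ) < 1 / lam l := by positivity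
      rw [neg_div]; linarith
    linarith

end aux

set_option maxHeartbeats 2000000 in
/-- Existence and uniqueness of the root of the secular function
`φ(μ) = Σ λ_k|ζ_k|²/(1+μλ_k)² − c` in the interval `(−1/λ_max, −1/λ_min)` when the
constraint matrix is indefinite (`λ_min < 0 < λ_max`) and the rotated vector `ζ` has
nonzero components along eigenvectors of both extreme eigenvalues. -/
theorem stmt_4 (n : ℕ) (hn : 1 ≤ n) (lam : Fin n → ℝ) (ζ : Fin n → ℂ) (c : ℝ)
    (j l : Fin n)
    (hj : ∀ k, lam j ≤ lam k)  -- λ_j = λ_min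
    (hl : ∀ k, lam k ≤ lam l)  -- λ_l = λ_max
    (hjneg : lam j < 0) (hlpos : 0 < lam l)
    (hζj : ζ j ≠ 0) (hζl : ζ l ≠ 0) :
    ∃! μ : ℝ, μ ∈ Set.Ioo (-1 / lam l) (-1 / lam j) ∧
      (∑ k, lam k * ‖ζ k‖ ^ 2 / (1 + μ * lam k) ^ 2) - c = 0 := by
  set r : Fin n → ℝ := fun k => ‖ζ k‖ ^ 2 with hr
  have hrpos : ∀ k, 0 ≤ r k := fun k => by positivity
  have hrl : 0 < r l := pow_pos (norm_pos_iff.mpr hζl) 2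
  have hrj : 0 < r j := pow_pos (norm_pos_iff.mpr hζj) 2
  set A : ℝ := -1 / lam l with hA
  set B : ℝ := -1 / lam j with hB
  have hA0 : A < 0 := by
    rw [hA, neg_div]
    simpa using (show (0:ℝ) < 1 / lam l by positivity)
  have hB0 : 0 < B := by
    rw [hB]; exact div_pos_of_neg_of_neg (by norm_num) hjneg
  set φ : ℝ → ℝ := fun μ => (∑ k, lam k * r k / (1 + μ * lam k) ^ 2) - c with hφ
  have key : ∀ μ ∈ Set.Ioo A B, ∀ k, 0 < 1 + μ * lam k := fun μ hμ k =>
    aux_pos lam j l hj hl hjneg hlpos hμ.1 hμ.2 k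
  have hrl' : 0 < r l := hrl
  have hrj' : 0 < r j := hrj
  -- strict antitonicity
  have anti : StrictAntiOn φ (Set.Ioo A B) := by
    intro μ1 hμ1 μ2 hμ2 h12
    rw [hφ]
    simp only
    rw [sub_lt_sub_iff_right]
    apply Finset.sum_lt_sum
    · intro k _
      have d1 := key μ1 hμ1 k
      have d2 := key μ2 hμ2 k
      rw [div_le_div_iff₀ (by positivity) (by positivity)]
      have e : lam k * r k * (1 + μ2 * lam k) ^ 2
          - lam k * r k * (1 + μ1 * lam k) ^ 2
          = lam k ^ 2 * r k * (μ2 - μ1) * ((1 + μ1 * lam k) + (1 + μ2 * lam k)) := by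
        ring
      nlinarith [mul_nonneg (mul_nonneg (mul_nonneg (sq_nonneg (lam k)) (hrpos k))
        (by linarith : (0:ℝ) ≤ μ2 - μ1)) (by linarith : (0:ℝ) ≤ (1 + μ1 * lam k) + (1 + μ2 * lam k))]
    · refine ⟨l, Finset.mem_univ l, ?_⟩
      have d1 := key μ1 hμ1 l
      have d2 := key μ2 hμ2 l
      rw [div_lt_div_iff₀ (by positivity) (by positivity)]
      have e : lam l * r l * (1 + μ2 * lam l) ^ 2
          - lam l * r l * (1 + μ1 * lam l) ^ 2
          = lam l ^ 2 * r l * (μ2 - μ1) * ((1 + μ1 * lam l) + (1 + μ2 * lam l)) := by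
        ring
      nlinarith [mul_pos (mul_pos (mul_pos (pow_pos hlpos 2) hrl)
        (by linarith : (0:ℝ) < μ2 - μ1)) (by linarith : (0:ℝ) < (1 + μ1 * lam l) + (1 + μ2 * lam l))]
  -- uniform bound constant
  set C : ℝ := ∑ k, |lam k| * r k with hC
  have hC0 : 0 ≤ C := Finset.sum_nonneg fun k _ => mul_nonneg (abs_nonneg _) (hrpos k)
  set D : ℝ := C + |c| + 1 with hD
  have hD0 : 0 < D := by rw [hD]; linarith [abs_nonneg c]
  clear_value r A B φ C D
  -- lower bound for nonpositive μ
  have lb : ∀ μ ∈ Set.Ioo A B, μ ≤ 0 →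
      lam l * r l / (1 + μ * lam l) ^ 2 - C - c ≤ φ μ := by
    intro μ hμ hμ0
    rw [hφ]
    simp only
    have hsplit : (∑ k, lam k * r k / (1 + μ * lam k) ^ 2)
        = lam l * r l / (1 + μ * lam l) ^ 2
          + ∑ k ∈ Finset.univ.erase l, lam k * r k / (1 + μ * lam k) ^ 2 :=
      (Finset.add_sum_erase _ _ (Finset.mem_univ l)).symm
    rw [hsplit]
    have hterm : ∀ k, -(|lam k| * r k) ≤ lam k * r k / (1 + μ * lam k) ^ 2 := by
      intro k
      have dk := key μ hμ k
      rcases le_or_gt 0 (lam k) with hk | hk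
      · have : 0 ≤ lam k * r k / (1 + μ * lam k) ^ 2 :=
          div_nonneg (mul_nonneg hk (hrpos k)) (by positivity)
        nlinarith [mul_nonneg (abs_nonneg (lam k)) (hrpos k)]
      · have hd1 : 1 ≤ 1 + μ * lam k := by nlinarith
        have habs : |lam k| = -lam k := abs_of_neg hk
        rw [le_div_iff₀ (by positivity), habs]
        have ht : lam k * r k ≤ 0 := mul_nonpos_of_nonpos_of_nonneg hk.le (hrpos k)
        have hdsq : 1 ≤ (1 + μ * lam k) ^ 2 := by nlinarith
        nlinarith [mul_nonneg (neg_nonneg.mpr ht)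
          (by linarith : (0:ℝ) ≤ (1 + μ * lam k) ^ 2 - 1)]
    have hrest : -C ≤ ∑ k ∈ Finset.univ.erase l, lam k * r k / (1 + μ * lam k) ^ 2 := by
      have h1 : ∑ k ∈ Finset.univ.erase l, -(|lam k| * r k)
          ≤ ∑ k ∈ Finset.univ.erase l, lam k * r k / (1 + μ * lam k) ^ 2 :=
        Finset.sum_le_sum fun k _ => hterm k
      have h2 : ∑ k ∈ Finset.univ.erase l, (|lam k| * r k) ≤ C := by
        rw [hC]
        exact Finset.sum_le_sum_of_subset_of_nonneg (Finset.subset_univ _)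
          (fun k _ _ => mul_nonneg (abs_nonneg _) (hrpos k))
      rw [Finset.sum_neg_distrib] at h1
      linarith
    linarith
  -- upper bound for nonnegative μ
  have ub : ∀ μ ∈ Set.Ioo A B, 0 ≤ μ →
      φ μ ≤ lam j * r j / (1 + μ * lam j) ^ 2 + C - c := by
    intro μ hμ hμ0
    rw [hφ]
    simp only
    have hsplit : (∑ k, lam k * r k / (1 + μ * lam k) ^ 2)
        = lam j * r j / (1 + μ * lam j) ^ 2
          + ∑ k ∈ Finset.univ.erase j, lam k * r k / (1 + μ * lam k) ^ 2 :=
      (Finset.add_sum_erase _ _ (Finset.mem_univ j)).symm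
    rw [hsplit]
    have hterm : ∀ k, lam k * r k / (1 + μ * lam k) ^ 2 ≤ |lam k| * r k := by
      intro k
      have dk := key μ hμ k
      rcases le_or_gt (lam k) 0 with hk | hk
      · have : lam k * r k / (1 + μ * lam k) ^ 2 ≤ 0 :=
          div_nonpos_of_nonpos_of_nonneg (mul_nonpos_of_nonpos_of_nonneg hk (hrpos k))
            (by positivity)
        nlinarith [mul_nonneg (abs_nonneg (lam k)) (hrpos k)]
      · have hd1 : 1 ≤ 1 + μ * lam k := by nlinarith
        have habs : |lam k| = lam k := abs_of_pos hk
        rw [div_le_iff₀ (by positivity), habs]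
        have ht : 0 ≤ lam k * r k := mul_nonneg hk.le (hrpos k)
        have hdsq : 1 ≤ (1 + μ * lam k) ^ 2 := by nlinarith
        nlinarith [mul_nonneg ht
          (by linarith : (0:ℝ) ≤ (1 + μ * lam k) ^ 2 - 1)]
    have hrest : ∑ k ∈ Finset.univ.erase j, lam k * r k / (1 + μ * lam k) ^ 2 ≤ C := by
      calc ∑ k ∈ Finset.univ.erase j, lam k * r k / (1 + μ * lam k) ^ 2
          ≤ ∑ k ∈ Finset.univ.erase j, |lam k| * r k :=
            Finset.sum_le_sum fun k _ => hterm k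
        _ ≤ C := by
            rw [hC]
            exact Finset.sum_le_sum_of_subset_of_nonneg (Finset.subset_univ _)
              (fun k _ _ => mul_nonneg (abs_nonneg _) (hrpos k))
    linarith
  -- choose the two test points
  have eA : A * lam l = -1 := by rw [hA]; exact div_mul_cancel₀ (-1) hlpos.ne'
  have eB : B * lam j = -1 := by rw [hB]; exact div_mul_cancel₀ (-1) hjneg.ne
  set ε1 : ℝ := min (1 / (2 * lam l)) (Real.sqrt (r l / (lam l * D))) with hε1
  have hrDl : 0 < r l / (lam l * D) := div_pos hrl (mul_pos hlpos hD0)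
  have hε1pos : 0 < ε1 :=
    lt_min (by positivity) (Real.sqrt_pos.mpr hrDl)
  set μ1 : ℝ := A + ε1 with hμ1def
  have hμ1neg : μ1 < 0 := by
    have h1 : ε1 ≤ 1 / (2 * lam l) := min_le_left _ _
    have h2 : A + 1 / (2 * lam l) = -(1 / (2 * lam l)) := by
      rw [hA]; field_simp; ring
    have h3 : (0:ℝ) < 1 / (2 * lam l) := by positivity
    rw [hμ1def]; linarith
  have hμ1mem : μ1 ∈ Set.Ioo A B := ⟨by rw [hμ1def]; linarith, by linarith⟩
  have hε1sq : ε1 ^ 2 ≤ r l / (lam l * D) := by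
    have h1 : ε1 ≤ Real.sqrt (r l / (lam l * D)) := min_le_right _ _
    calc ε1 ^ 2 ≤ Real.sqrt (r l / (lam l * D)) ^ 2 :=
          pow_le_pow_left₀ hε1pos.le h1 2
      _ = r l / (lam l * D) := Real.sq_sqrt hrDl.le
  have hd1 : 1 + μ1 * lam l = ε1 * lam l := by
    rw [hμ1def]; linear_combination eA
  have htermL : D ≤ lam l * r l / (1 + μ1 * lam l) ^ 2 := by
    rw [hd1, le_div_iff₀ (pow_pos (mul_pos hε1pos hlpos) 2)]
    have hkey : D * lam l ^ 2 * (r l / (lam l * D)) = lam l * r l := by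
      field_simp
    nlinarith [mul_le_mul_of_nonneg_left hε1sq
      ((mul_pos hD0 (pow_pos hlpos 2)).le)]
  have hφμ1 : 0 < φ μ1 := by
    have h1 := lb μ1 hμ1mem hμ1neg.le
    have h2 := le_abs_self c
    rw [hD] at htermL
    linarith
  -- second point
  set ε2 : ℝ := min (B / 2) (Real.sqrt (r j / (-lam j * D))) with hε2
  have hjp : 0 < -lam j := neg_pos.mpr hjneg
  have hrDj : 0 < r j / (-lam j * D) := div_pos hrj (mul_pos hjp hD0)
  have hε2pos : 0 < ε2 :=
    lt_min (half_pos hB0) (Real.sqrt_pos.mpr hrDj)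
  have hε2le : ε2 ≤ B / 2 := min_le_left _ _
  set μ2 : ℝ := B - ε2 with hμ2def
  have hμ2pos : 0 < μ2 := by rw [hμ2def]; linarith
  have hμ2mem : μ2 ∈ Set.Ioo A B := ⟨by linarith, by rw [hμ2def]; linarith⟩
  have hε2sq : ε2 ^ 2 ≤ r j / (-lam j * D) := by
    have h1 : ε2 ≤ Real.sqrt (r j / (-lam j * D)) := min_le_right _ _
    calc ε2 ^ 2 ≤ Real.sqrt (r j / (-lam j * D)) ^ 2 :=
          pow_le_pow_left₀ hε2pos.le h1 2
      _ = r j / (-lam j * D) := Real.sq_sqrt hrDj.le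
  have hd2 : 1 + μ2 * lam j = ε2 * (-lam j) := by
    rw [hμ2def]; linear_combination eB
  have htermJ : lam j * r j / (1 + μ2 * lam j) ^ 2 ≤ -D := by
    rw [hd2, div_le_iff₀ (pow_pos (mul_pos hε2pos hjp) 2)]
    have hkey : D * (-lam j) ^ 2 * (r j / (-lam j * D)) = -lam j * r j := by
      field_simp [hjneg.ne, hD0.ne']
      
    nlinarith [mul_le_mul_of_nonneg_left hε2sq
      ((mul_pos hD0 (pow_pos hjp 2)).le)]
  have hφμ2 : φ μ2 < 0 := by
    have h1 := ub μ2 hμ2mem hμ2pos.le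
    have h2 := neg_abs_le c
    rw [hD] at htermJ
    linarith
  have h12 : μ1 < μ2 := lt_trans hμ1neg hμ2pos
  have hsub : Set.Icc μ1 μ2 ⊆ Set.Ioo A B := fun x hx =>
    ⟨lt_of_lt_of_le hμ1mem.1 hx.1, lt_of_le_of_lt hx.2 hμ2mem.2⟩
  -- continuity
  have cont : ContinuousOn φ (Set.Icc μ1 μ2) := by
    rw [hφ]
    apply ContinuousOn.sub _ continuousOn_const
    apply continuousOn_finset_sum
    intro k _
    apply ContinuousOn.div continuousOn_const
    · exact ((continuous_const.add (continuous_id.mul continuous_const)).pow 2).continuousOn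
    · intro μ hμ
      exact pow_ne_zero 2 (ne_of_gt (key μ (hsub hμ) k))
  -- intermediate value theorem
  have hmem0 : (0:ℝ) ∈ Set.Icc (φ μ2) (φ μ1) := ⟨hφμ2.le, hφμ1.le⟩
  obtain ⟨μ, hμIcc, hμ0⟩ := intermediate_value_Icc' h12.le cont hmem0
  have hμmem : μ ∈ Set.Ioo A B := hsub hμIcc
  refine ⟨μ, ⟨hμmem, ?_⟩, ?_⟩
  · rw [hφ] at hμ0
    simp only [hr] at hμ0
    exact hμ0
  · rintro y ⟨hy, hy0⟩
    apply anti.injOn hy hμmem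
    have hyφ : φ y = 0 := by rw [hφ]; simp only [hr]; exact hy0
    have hμφ : φ μ = 0 := hμ0
    rw [hyφ, hμφ]
end

section
/- Let n ≥ 1, λ ∈ ℝⁿ with λ_k ≥ 0 for all k and λ_max = max_k λ_k > 0, let ζ ∈ ℂⁿ with ζ_l ≠ 0 for some index l with λ_l = λ_max, let c > 0, and define φ(μ) = Σ_{k=1}^n λ_k|ζ_k|²/(1+μλ_k)² − c. Then there exists a unique μ ∈ (−1/λ_max, +∞) such that φ(μ) = 0. -/
/-- Existence and uniqueness of the root of the secular function
`φ(μ) = Σ λ_k|ζ_k|²/(1+μλ_k)² − c` in the interval `(−1/λ_max, +∞)` when the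
constraint matrix is positive semidefinite with `λ_max > 0`, the rotated vector `ζ` has
a nonzero component along an eigenvector of `λ_max`, and `c > 0`. -/
theorem stmt_5 (n : ℕ) (hn : 1 ≤ n) (lam : Fin n → ℝ) (ζ : Fin n → ℂ) (c : ℝ)
    (hlam : ∀ k, 0 ≤ lam k)
    (l : Fin n)
    (hl : ∀ k, lam k ≤ lam l)  -- λ_l = λ_max
    (hlpos : 0 < lam l)
    (hζl : ζ l ≠ 0) (hc : 0 < c) :
    ∃! μ : ℝ, μ ∈ Set.Ioi (-1 / lam l) ∧
      (∑ k, lam k * ‖ζ k‖ ^ 2 / (1 + μ * lam k) ^ 2) - c = 0 := by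
  have habs : 0 < ‖ζ l‖ := norm_pos_iff.mpr hζl
  set A : Fin n → ℝ := fun k => lam k * ‖ζ k‖ ^ 2 with hAdef
  have hA0 : ∀ k, 0 ≤ A k := fun k => mul_nonneg (hlam k) (sq_nonneg _)
  have hAl : 0 < A l := mul_pos hlpos (pow_pos habs 2)
  set φ : ℝ → ℝ := fun μ => (∑ k, A k / (1 + μ * lam k) ^ 2) - c with hφdef
  -- denominators positive on the interval
  have hden : ∀ μ : ℝ, -1 / lam l < μ → ∀ k, 0 < 1 + μ * lam k := by
    intro μ hμ k
    rcases eq_or_lt_of_le (hlam k) with h | h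
    · simp [← h]
    · have h1 : 0 < μ + 1 / lam l := by
        rw [neg_div] at hμ; linarith
      have h2 : (μ + 1 / lam l) * lam k = μ * lam k + lam k / lam l := by
        field_simp
      have h3 : lam k / lam l ≤ 1 := (div_le_one hlpos).2 (hl k)
      nlinarith [mul_pos h1 h]
  -- strict antitonicity
  have hanti : ∀ x ∈ Set.Ioi (-1 / lam l), ∀ y ∈ Set.Ioi (-1 / lam l), x < y → φ y < φ x := by
    intro x hx y hy hxy
    have hsum : (∑ k, A k / (1 + y * lam k) ^ 2) < ∑ k, A k / (1 + x * lam k) ^ 2 := by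
      apply Finset.sum_lt_sum
      · intro k _
        have hdx := hden x hx k
        have hdy := hden y hy k
        gcongr
        · exact hA0 k
        · nlinarith [hlam k]
      · refine ⟨l, Finset.mem_univ l, ?_⟩
        have hdx := hden x hx l
        have hdy := hden y hy l
        apply div_lt_div_of_pos_left hAl (by positivity)
        have h5 : 1 + x * lam l < 1 + y * lam l := by nlinarith
        exact pow_lt_pow_left₀ h5 hdx.le (by norm_num)
    simpa [hφdef] using sub_lt_sub_right hsum c
  -- choose a near -1/λ_l
  set ε : ℝ := min (1 / lam l) (Real.sqrt (‖ζ l‖ ^ 2 / (c * lam l))) with hεdef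
  have hε0 : 0 < ε :=
    lt_min (by positivity) (Real.sqrt_pos.2 (div_pos (pow_pos habs 2) (by positivity)))
  have hεsq : ε ^ 2 ≤ ‖ζ l‖ ^ 2 / (c * lam l) := by
    have h1 : ε ≤ Real.sqrt (‖ζ l‖ ^ 2 / (c * lam l)) := min_le_right _ _
    have h2 : ε ^ 2 ≤ Real.sqrt (‖ζ l‖ ^ 2 / (c * lam l)) ^ 2 :=
      pow_le_pow_left₀ hε0.le h1 2
    rwa [Real.sq_sqrt (by positivity)] at h2
  set a : ℝ := -1 / lam l + ε with hadef
  have ha_mem : -1 / lam l < a := by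
    rw [hadef]; exact lt_add_of_pos_right _ hε0
  have ha_le : a ≤ 0 := by
    have : ε ≤ 1 / lam l := min_le_left _ _
    rw [hadef, neg_div]; linarith
  -- φ a ≥ 0
  have hφa : 0 ≤ φ a := by
    have hterm : c ≤ A l / (1 + a * lam l) ^ 2 := by
      have hd : 1 + a * lam l = ε * lam l := by
        rw [hadef]; field_simp; ring
      rw [hd, le_div_iff₀ (by positivity)]
      have h6 : ε ^ 2 * (c * lam l) ≤ ‖ζ l‖ ^ 2 :=
        (le_div_iff₀ (by positivity)).1 hεsq
      simp only [hAdef]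
      nlinarith [mul_le_mul_of_nonneg_right h6 hlpos.le]
    have hsum : A l / (1 + a * lam l) ^ 2 ≤ ∑ k, A k / (1 + a * lam k) ^ 2 :=
      Finset.single_le_sum (f := fun k => A k / (1 + a * lam k) ^ 2)
        (fun k _ => div_nonneg (hA0 k) (sq_nonneg _)) (Finset.mem_univ l)
    simp only [hφdef]; linarith
  -- choose b large
  set S : ℝ := ∑ k, ‖ζ k‖ ^ 2 with hSdef
  set b : ℝ := max 1 (S / c) with hbdef
  have hb1 : (1:ℝ) ≤ b := le_max_left _ _
  have hbpos : 0 < b := lt_of_lt_of_le one_pos hb1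
  have hb_mem : -1 / lam l < b := ha_mem.trans (lt_of_le_of_lt ha_le (by linarith))
  have hφb : φ b ≤ 0 := by
    have hterm : ∀ k, A k / (1 + b * lam k) ^ 2 ≤ ‖ζ k‖ ^ 2 / (4 * b) := by
      intro k
      have hd := hden b hb_mem k
      simp only [hAdef]
      rw [div_le_div_iff₀ (by positivity) (by positivity)]
      nlinarith [sq_nonneg (‖ζ k‖), hlam k,
        mul_nonneg (sq_nonneg (‖ζ k‖)) (sq_nonneg (1 - b * lam k))]
    have hsum : (∑ k, A k / (1 + b * lam k) ^ 2) ≤ S / (4 * b) := by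
      have : S / (4 * b) = ∑ k, ‖ζ k‖ ^ 2 / (4 * b) := by
        rw [hSdef, Finset.sum_div]
      rw [this]
      exact Finset.sum_le_sum fun k _ => hterm k
    have hSb : S / (4 * b) ≤ c := by
      have hSc : S / c ≤ b := le_max_right _ _
      have hS0 : 0 ≤ S := Finset.sum_nonneg fun k _ => sq_nonneg _
      rw [div_le_iff₀ hc] at hSc
      rw [div_le_iff₀ (by positivity)]
      nlinarith
    simp only [hφdef]; linarith
  -- IVT
  have hab : a ≤ b := le_trans ha_le (by linarith)
  have hcont : ContinuousOn φ (Set.Icc a b) := by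
    apply ContinuousOn.sub _ continuousOn_const
    apply continuousOn_finset_sum
    intro k _
    apply ContinuousOn.div continuousOn_const
    · fun_prop
    · intro μ hμ
      have : -1 / lam l < μ := lt_of_lt_of_le ha_mem hμ.1
      exact pow_ne_zero 2 (ne_of_gt (hden μ this k))
  obtain ⟨μ, hμmem, hμ0⟩ := intermediate_value_Icc' hab hcont ⟨hφb, hφa⟩
  have hμIoi : μ ∈ Set.Ioi (-1 / lam l) := lt_of_lt_of_le ha_mem hμmem.1
  refine ⟨μ, ⟨hμIoi, by simpa [hφdef, hAdef] using hμ0⟩, ?_⟩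
  rintro ν ⟨hνIoi, hν0⟩
  have hφν : φ ν = 0 := by simpa [hφdef, hAdef] using hν0
  by_contra hne
  rcases lt_or_gt_of_ne hne with h | h
  · have := hanti ν hνIoi μ hμIoi h
    rw [hμ0, hφν] at this; exact lt_irrefl 0 this
  · have := hanti μ hμIoi ν hνIoi h
    rw [hμ0, hφν] at this; exact lt_irrefl 0 this
end

section
/- Let n ≥ 1, λ ∈ ℝⁿ, ζ ∈ ℂⁿ, b ∈ ℂⁿ, c ∈ ℝ, and define φ(μ) = Σ_{k=1}^n λ_k·|(ζ_k + μb_k)/(1+μλ_k)|² − 2Re( Σ_{k=1}^n conj(b_k)·(ζ_k + μb_k)/(1+μλ_k) ) − c. Then at every μ ∈ ℝ with 1 + μλ_k > 0 for all k, φ is differentiable with φ′(μ) = −2·Σ_{k=1}^n |b_k − λ_kζ_k|²/(1+μλ_k)³, so φ′(μ) ≤ 0, with strict inequality whenever b_k ≠ λ_kζ_k for some k; hence φ is strictly decreasing on any interval where 1 + μλ_k > 0 for all k (assuming b_k ≠ λ_kζ_k for some k), and φ(μ) = 0 has at most one solution there. -/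
private lemma term_eq (l : ℝ) (z w : ℂ) (μ : ℝ) :
    l * ‖(z + (μ : ℂ) * w) / (1 + (μ : ℂ) * (l : ℂ))‖ ^ 2
      - 2 * ((starRingEnd ℂ) w * ((z + (μ : ℂ) * w) / (1 + (μ : ℂ) * (l : ℂ)))).re
    = l * Complex.normSq (z + (μ : ℂ) * w) / (1 + μ * l) ^ 2
      - 2 * ((starRingEnd ℂ) w * (z + (μ : ℂ) * w)).re / (1 + μ * l) := by
  have hc : (1 + (μ : ℂ) * (l : ℂ)) = (((1 + μ * l : ℝ)) : ℂ) := by push_cast; ring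
  rw [hc, Complex.sq_norm, Complex.normSq_div, Complex.normSq_ofReal,
    show (starRingEnd ℂ) w * ((z + (μ : ℂ) * w) / (((1 + μ * l : ℝ)) : ℂ))
      = ((starRingEnd ℂ) w * (z + (μ : ℂ) * w)) / (((1 + μ * l : ℝ)) : ℂ) from
      (mul_div_assoc _ _ _).symm,
    Complex.div_ofReal_re]
  ring

private lemma term_deriv (l : ℝ) (z w : ℂ) (μ : ℝ) (h : 0 < 1 + μ * l) :
    HasDerivAt (fun μ : ℝ =>
      l * Complex.normSq (z + (μ : ℂ) * w) / (1 + μ * l) ^ 2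
      - 2 * ((starRingEnd ℂ) w * (z + (μ : ℂ) * w)).re / (1 + μ * l))
      (-2 * Complex.normSq (w - (l : ℂ) * z) / (1 + μ * l) ^ 3) μ := by
  set Z := Complex.normSq z with hZ
  set B := Complex.normSq w with hB
  set P := ((starRingEnd ℂ) w * z).re with hP
  have hN : ∀ t : ℝ, Complex.normSq (z + (t : ℂ) * w) = Z + 2 * t * P + t ^ 2 * B := by
    intro t
    simp only [hZ, hB, hP, Complex.normSq_apply, Complex.mul_re, Complex.mul_im,
      Complex.add_re, Complex.add_im, Complex.ofReal_re, Complex.ofReal_im, Complex.conj_re,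
      Complex.conj_im]
    ring
  have hR : ∀ t : ℝ, ((starRingEnd ℂ) w * (z + (t : ℂ) * w)).re = P + t * B := by
    intro t
    simp only [hB, hP, Complex.normSq_apply, Complex.mul_re, Complex.mul_im,
      Complex.add_re, Complex.add_im, Complex.ofReal_re, Complex.ofReal_im, Complex.conj_re,
      Complex.conj_im]
    ring
  have hD : Complex.normSq (w - (l : ℂ) * z) = B - 2 * l * P + l ^ 2 * Z := by
    simp only [hZ, hB, hP, Complex.normSq_apply, Complex.mul_re, Complex.mul_im,
      Complex.sub_re, Complex.sub_im, Complex.ofReal_re, Complex.ofReal_im, Complex.conj_re,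
      Complex.conj_im]
    ring
  have hd : (1 + μ * l) ≠ 0 := ne_of_gt h
  have h1 : HasDerivAt (fun t : ℝ => 1 + t * l) l μ := by
    simpa using ((hasDerivAt_id μ).mul_const l).const_add 1
  have ha : HasDerivAt (fun t : ℝ => 2 * t * P) (2 * P) μ := by
    simpa using ((hasDerivAt_id μ).const_mul 2).mul_const P
  have hb : HasDerivAt (fun t : ℝ => t ^ 2 * B) (2 * μ * B) μ := by
    simpa using (hasDerivAt_pow 2 μ).mul_const B
  have h2 : HasDerivAt (fun t : ℝ => l * (Z + 2 * t * P + t ^ 2 * B))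
      (l * (2 * P + 2 * μ * B)) μ := by
    have := ((ha.const_add Z).add hb).const_mul l
    exact this
  have h3 : HasDerivAt (fun t : ℝ => (1 + t * l) ^ 2) (2 * (1 + μ * l) * l) μ := by
    have := h1.fun_pow 2
    simpa using this
  have H1 := h2.div h3 (pow_ne_zero 2 hd)
  have h4 : HasDerivAt (fun t : ℝ => 2 * (P + t * B)) (2 * B) μ := by
    have : HasDerivAt (fun t : ℝ => t * B) B μ := by
      simpa using (hasDerivAt_id μ).mul_const B
    simpa using (this.const_add P).const_mul 2
  have H2 := h4.div h1 hd
  have H := H1.sub H2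
  have heq : (fun t : ℝ =>
      l * Complex.normSq (z + (t : ℂ) * w) / (1 + t * l) ^ 2
      - 2 * ((starRingEnd ℂ) w * (z + (t : ℂ) * w)).re / (1 + t * l))
      = (fun t : ℝ => l * (Z + 2 * t * P + t ^ 2 * B) / (1 + t * l) ^ 2
        - 2 * (P + t * B) / (1 + t * l)) := by
    funext t; rw [hN t, hR t]
  rw [heq, hD]
  refine H.congr_deriv ?_
  field_simp
  ring

/-- The secular function for the general QCQP-1 subproblem,
`φ(μ) = Σ λ_k|(ζ_k+μb_k)/(1+μλ_k)|² − 2Re(Σ conj(b_k)(ζ_k+μb_k)/(1+μλ_k)) − c`,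
has derivative `φ′(μ) = −2Σ |b_k − λ_kζ_k|²/(1+μλ_k)³ ≤ 0` wherever `1+μλ_k > 0` for
all `k` (strictly negative if some `b_k ≠ λ_kζ_k`); hence `φ` is strictly decreasing on
any interval where `1+μλ_k > 0` for all `k`, and `φ(μ) = 0` has at most one solution
there. -/
theorem stmt_6 (n : ℕ) (hn : 1 ≤ n) (lam : Fin n → ℝ) (ζ b : Fin n → ℂ) (c : ℝ)
    (φ : ℝ → ℝ)
    (hφ : φ = fun (μ : ℝ) =>
      (∑ k, lam k * ‖(ζ k + (μ : ℂ) * b k) / (1 + (μ : ℂ) * (lam k : ℂ))‖ ^ 2)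
      - 2 * (∑ k, (starRingEnd ℂ) (b k) * ((ζ k + (μ : ℂ) * b k) / (1 + (μ : ℂ) * (lam k : ℂ)))).re
      - c) :
    (∀ μ : ℝ, (∀ k, 0 < 1 + μ * lam k) →
      HasDerivAt φ (-2 * ∑ k, ‖b k - (lam k : ℂ) * ζ k‖ ^ 2 / (1 + μ * lam k) ^ 3) μ ∧
      (-2 * ∑ k, ‖b k - (lam k : ℂ) * ζ k‖ ^ 2 / (1 + μ * lam k) ^ 3) ≤ 0 ∧
      ((∃ k, b k ≠ (lam k : ℂ) * ζ k) →
        (-2 * ∑ k, ‖b k - (lam k : ℂ) * ζ k‖ ^ 2 / (1 + μ * lam k) ^ 3) < 0)) ∧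
    (∀ s : Set ℝ, s.OrdConnected → (∀ μ ∈ s, ∀ k, 0 < 1 + μ * lam k) →
      (∃ k, b k ≠ (lam k : ℂ) * ζ k) →
      StrictAntiOn φ s ∧ ∀ μ₁ ∈ s, ∀ μ₂ ∈ s, φ μ₁ = 0 → φ μ₂ = 0 → μ₁ = μ₂) := by
  -- rewrite φ as a sum of real rational terms
  have hφ' : φ = fun (μ : ℝ) =>
      (∑ k, (lam k * Complex.normSq (ζ k + (μ : ℂ) * b k) / (1 + μ * lam k) ^ 2
        - 2 * ((starRingEnd ℂ) (b k) * (ζ k + (μ : ℂ) * b k)).re / (1 + μ * lam k))) - c := by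
    rw [hφ]; funext μ
    rw [Complex.re_sum, Finset.mul_sum]
    congr 1
    rw [← Finset.sum_sub_distrib]
    exact Finset.sum_congr rfl fun k _ => term_eq (lam k) (ζ k) (b k) μ
  have main : ∀ μ : ℝ, (∀ k, 0 < 1 + μ * lam k) →
      HasDerivAt φ (-2 * ∑ k, ‖b k - (lam k : ℂ) * ζ k‖ ^ 2 / (1 + μ * lam k) ^ 3) μ := by
    intro μ hpos
    rw [hφ']
    have := HasDerivAt.fun_sum (fun k (_ : k ∈ Finset.univ) =>
      term_deriv (lam k) (ζ k) (b k) μ (hpos k))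
    have H := this.sub_const c
    refine H.congr_deriv ?_
    rw [Finset.mul_sum]
    refine Finset.sum_congr rfl fun k _ => ?_
    rw [Complex.sq_norm]
    ring
  have sumnn : ∀ μ : ℝ, (∀ k, 0 < 1 + μ * lam k) →
      (0 : ℝ) ≤ ∑ k, ‖b k - (lam k : ℂ) * ζ k‖ ^ 2 / (1 + μ * lam k) ^ 3 :=
    fun μ hpos => Finset.sum_nonneg fun k _ =>
      div_nonneg (sq_nonneg _) (le_of_lt (pow_pos (hpos k) 3))
  constructor
  · intro μ hpos
    refine ⟨main μ hpos, ?_, ?_⟩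
    · have := sumnn μ hpos; nlinarith
    · rintro ⟨k₀, hk₀⟩
      have hpossum : (0 : ℝ) < ∑ k, ‖b k - (lam k : ℂ) * ζ k‖ ^ 2 / (1 + μ * lam k) ^ 3 := by
        refine Finset.sum_pos' (fun k _ => div_nonneg (sq_nonneg _) (le_of_lt (pow_pos (hpos k) 3)))
          ⟨k₀, Finset.mem_univ k₀, ?_⟩
        have h1 : 0 < ‖b k₀ - (lam k₀ : ℂ) * ζ k₀‖ := by
          simpa [AbsoluteValue.pos_iff] using sub_ne_zero.mpr hk₀
        exact div_pos (pow_pos h1 2) (pow_pos (hpos k₀) 3)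
      nlinarith
  · intro s hconn hpos hb
    have hconv : Convex ℝ s := (convex_iff_ordConnected.mpr hconn)
    have hanti : StrictAntiOn φ s := by
      apply strictAntiOn_of_deriv_neg hconv
      · intro μ hμ
        exact (main μ (hpos μ hμ)).continuousAt.continuousWithinAt
      · intro μ hμ
        have hμs : μ ∈ s := interior_subset hμ
        have hm := main μ (hpos μ hμs)
        rw [hm.deriv]
        have hpossum : (0 : ℝ) < ∑ k, ‖b k - (lam k : ℂ) * ζ k‖ ^ 2 / (1 + μ * lam k) ^ 3 := by
          obtain ⟨k₀, hk₀⟩ := hb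
          refine Finset.sum_pos' (fun k _ => div_nonneg (sq_nonneg _) (le_of_lt (pow_pos (hpos μ hμs k) 3)))
            ⟨k₀, Finset.mem_univ k₀, ?_⟩
          have h1 : 0 < ‖b k₀ - (lam k₀ : ℂ) * ζ k₀‖ := by
            simpa [AbsoluteValue.pos_iff] using sub_ne_zero.mpr hk₀
          exact div_pos (pow_pos h1 2) (pow_pos (hpos μ hμs k₀) 3)
        nlinarith
    refine ⟨hanti, fun μ₁ h₁ μ₂ h₂ e₁ e₂ => ?_⟩
    exact hanti.injOn h₁ h₂ (by rw [e₁, e₂])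
end

section
/- Let t > 0, y ≥ 0, s > 0, and ρ ∈ ℝ with ρ > y·t. Then the real cubic polynomial p(μ) = t²μ³ + (2ρt + yt²)μ² + (2yρt + ρ²)μ + yρ² − ρ²s has exactly one real root, i.e., there exists a unique μ ∈ ℝ with p(μ) = 0. -/
/-- Appendix B: for `t > 0`, `y ≥ 0`, `s > 0` and `ρ > y·t`, the cubic
`t²μ³ + (2ρt + yt²)μ² + (2yρt + ρ²)μ + yρ² − ρ²s` has exactly one real root. -/
theorem stmt_16 (t y s ρ : ℝ) (ht : 0 < t) (hy : 0 ≤ y) (hs : 0 < s)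
    (hρ : y * t < ρ) :
    ∃! μ : ℝ, t ^ 2 * μ ^ 3 + (2 * ρ * t + y * t ^ 2) * μ ^ 2
      + (2 * y * ρ * t + ρ ^ 2) * μ + y * ρ ^ 2 - ρ ^ 2 * s = 0 := by
  have hρ0 : 0 < ρ := lt_of_le_of_lt (by positivity) hρ
  have hc : 0 < ρ - y * t := by linarith
  set f : ℝ → ℝ := fun μ => (t * μ + ρ) ^ 2 * (μ + y) with hf
  have key : ∀ μ : ℝ, t ^ 2 * μ ^ 3 + (2 * ρ * t + y * t ^ 2) * μ ^ 2
      + (2 * y * ρ * t + ρ ^ 2) * μ + y * ρ ^ 2 - ρ ^ 2 * s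
      = f μ - ρ ^ 2 * s := by intro μ; simp only [hf]; ring
  -- strict monotonicity on (-y, ∞)
  have mono : ∀ a b : ℝ, -y < a → a < b → f a < f b := by
    intro a b ha hab
    have h1 : 0 < t * a + ρ := by nlinarith
    have h2 : 0 < a + y := by linarith
    have h3 : 0 < t * b + ρ := by nlinarith
    have h4 : 0 < b + y := by linarith
    have h5 : t * a + ρ < t * b + ρ := by nlinarith
    have hsq : (t * a + ρ) ^ 2 < (t * b + ρ) ^ 2 :=
      pow_lt_pow_left₀ h5 h1.le two_ne_zero
    simp only [hf]
    exact mul_lt_mul'' hsq (by linarith) (by positivity) h2.le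
  -- any root lies in (-y, ∞)
  have pos : ∀ a : ℝ, f a = ρ ^ 2 * s → -y < a := by
    intro a hfa
    by_contra h
    push_neg at h
    have h2 : a + y ≤ 0 := by linarith
    have h3 : f a ≤ 0 := mul_nonpos_of_nonneg_of_nonpos (sq_nonneg _) h2
    have h4 : 0 < ρ ^ 2 * s := by positivity
    linarith
  -- existence via IVT
  set K : ℝ := -y + ρ ^ 2 * s / (ρ - y * t) ^ 2 with hKdef
  have hKy : -y ≤ K := by
    have : 0 < ρ ^ 2 * s / (ρ - y * t) ^ 2 := by positivity
    rw [hKdef]; linarith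
  have hfy : f (-y) = 0 := by simp only [hf]; ring
  have hfK : ρ ^ 2 * s ≤ f K := by
    have h1 : ρ - y * t ≤ t * K + ρ := by
      have : 0 ≤ t * (ρ ^ 2 * s / (ρ - y * t) ^ 2) := by positivity
      simp only [hKdef]; nlinarith
    have h2 : (ρ - y * t) ^ 2 ≤ (t * K + ρ) ^ 2 := by nlinarith
    have h3 : K + y = ρ ^ 2 * s / (ρ - y * t) ^ 2 := by simp [hKdef]
    have h4 : f K = (t * K + ρ) ^ 2 * (ρ ^ 2 * s / (ρ - y * t) ^ 2) := by
      simp only [hf]; rw [h3]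
    rw [h4]
    have h5 : (ρ - y * t) ^ 2 * (ρ ^ 2 * s / (ρ - y * t) ^ 2)
        ≤ (t * K + ρ) ^ 2 * (ρ ^ 2 * s / (ρ - y * t) ^ 2) := by
      apply mul_le_mul_of_nonneg_right h2 (by positivity)
    calc ρ ^ 2 * s = (ρ - y * t) ^ 2 * (ρ ^ 2 * s / (ρ - y * t) ^ 2) := by
            field_simp
      _ ≤ _ := h5
  have hcont : ContinuousOn f (Set.Icc (-y) K) := by fun_prop
  have hmem : ρ ^ 2 * s ∈ Set.Icc (f (-y)) (f K) := by
    constructor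
    · rw [hfy]; positivity
    · exact hfK
  obtain ⟨μ, _, hμ⟩ := intermediate_value_Icc hKy hcont hmem
  refine ⟨μ, ?_, ?_⟩
  · show t ^ 2 * μ ^ 3 + (2 * ρ * t + y * t ^ 2) * μ ^ 2
      + (2 * y * ρ * t + ρ ^ 2) * μ + y * ρ ^ 2 - ρ ^ 2 * s = 0
    rw [key, hμ]; ring
  · intro b hb
    have hb : t ^ 2 * b ^ 3 + (2 * ρ * t + y * t ^ 2) * b ^ 2
      + (2 * y * ρ * t + ρ ^ 2) * b + y * ρ ^ 2 - ρ ^ 2 * s = 0 := hb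
    rw [key] at hb
    have hfb : f b = ρ ^ 2 * s := by linarith
    rcases lt_trichotomy b μ with h | h | h
    · exact absurd (mono b μ (pos b hfb) h) (by rw [hfb, hμ]; exact lt_irrefl _)
    · exact h
    · exact absurd (mono μ b (pos μ hμ) h) (by rw [hfb, hμ]; exact lt_irrefl _)
end
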